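/- arXiv:2010.05041 — 8 statements merged into one kernel-verified Lean document; each statement's English description precedes it below -/
import Mathlib

section
/- Every hereditary, isomorphism-closed class of finite graphs which has the extension property for partial automorphisms (EPPA) and the joint embedding property also has the amalgamation property. -/
open SimpleGraph

/-- A class of finite graphs, indexed by the number of vertices. -/
abbrev GClass := ∀ n : ℕ, SimpleGraph (Fin n) → Prop

/-- `K` is hereditary: closed under induced subgraphs (given by graph embeddings). -/
def Hereditary (K : GClass) : Prop :=
  ∀ {n m : ℕ} (A : SimpleGraph (Fin n)) (B : SimpleGraph (Fin m)),
    K n A → Nonempty (B ↪g A) → K m B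

/-- `K` is closed under isomorphism. -/
def IsoClosed (K : GClass) : Prop :=
  ∀ {n : ℕ} (A B : SimpleGraph (Fin n)), K n A → Nonempty (A ≃g B) → K n B

/-- Joint embedding property. -/
def JEP (K : GClass) : Prop :=
  ∀ {n m : ℕ} (A : SimpleGraph (Fin n)) (B : SimpleGraph (Fin m)),
    K n A → K m B →
    ∃ (p : ℕ) (C : SimpleGraph (Fin p)),
      K p C ∧ Nonempty (A ↪g C) ∧ Nonempty (B ↪g C)

/-- Amalgamation property. -/
def Amalgamation (K : GClass) : Prop :=
  ∀ {na n1 n2 : ℕ} (A : SimpleGraph (Fin na)) (B1 : SimpleGraph (Fin n1))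
    (B2 : SimpleGraph (Fin n2)) (α1 : A ↪g B1) (α2 : A ↪g B2),
    K na A → K n1 B1 → K n2 B2 →
    ∃ (p : ℕ) (C : SimpleGraph (Fin p)) (β1 : B1 ↪g C) (β2 : B2 ↪g C),
      K p C ∧ ∀ a, β1 (α1 a) = β2 (α2 a)

/-- A partial automorphism of `A`: an isomorphism between two induced subgraphs of `A`,
given by its domain `s` and the map `f` (only the values on `s` matter). -/
def IsPartialAuto {n : ℕ} (A : SimpleGraph (Fin n)) (s : Set (Fin n))
    (f : Fin n → Fin n) : Prop :=
  Set.InjOn f s ∧ ∀ a ∈ s, ∀ b ∈ s, (A.Adj (f a) (f b) ↔ A.Adj a b)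

/-- Extension property for partial automorphisms. -/
def HasEPPA (K : GClass) : Prop :=
  ∀ {n : ℕ} (A : SimpleGraph (Fin n)), K n A →
    ∃ (m : ℕ) (B : SimpleGraph (Fin m)) (e : A ↪g B), K m B ∧
      ∀ (s : Set (Fin n)) (f : Fin n → Fin n), IsPartialAuto A s f →
        ∃ g : B ≃g B, ∀ a ∈ s, g (e a) = e (f a)

/-! Amalgamate `B₁ ← A → B₂` inside a joint embedding `D` of `B₁` and `B₂`: the two copies of
`A` in `D` differ by a partial automorphism of `D`, which EPPA extends to an automorphism `g`
of some `C ⊇ D`. Composing the first embedding into `C` with `g` makes the two copies agree. -/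

theorem isPartialAuto_extend_range {V : Type*} {q : ℕ} {A : SimpleGraph V}
    {D : SimpleGraph (Fin q)} (φ ψ : A ↪g D) :
    IsPartialAuto D (Set.range φ) (Function.extend φ ψ id) := by
  have hextend (a : V) : Function.extend φ ψ id (φ a) = ψ a :=
    φ.injective.extend_apply _ _ a
  constructor
  · rintro _ ⟨a, rfl⟩ _ ⟨b, rfl⟩ hab
    rw [hextend, hextend] at hab
    rw [ψ.injective hab]
  · rintro _ ⟨a, rfl⟩ _ ⟨b, rfl⟩
    rw [hextend, hextend, ψ.map_adj_iff, φ.map_adj_iff]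

theorem HasEPPA.exists_embeddings_comp_eq {K : GClass} (hK : HasEPPA K) {V : Type*} {q : ℕ}
    {A : SimpleGraph V} {D : SimpleGraph (Fin q)} (hD : K q D) (φ ψ : A ↪g D) :
    ∃ (p : ℕ) (C : SimpleGraph (Fin p)) (β₁ β₂ : D ↪g C), K p C ∧ ∀ a, β₁ (φ a) = β₂ (ψ a) := by
  obtain ⟨p, C, e, hC, hextend⟩ := hK D hD
  obtain ⟨g, hg⟩ := hextend _ _ (isPartialAuto_extend_range φ ψ)
  refine ⟨p, C, g.toEmbedding.comp e, e, hC, fun a => ?_⟩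
  simpa [φ.injective.extend_apply] using hg (φ a) ⟨a, rfl⟩

theorem eppa_jep_implies_amalgamation_general (K : GClass)
    (hEPPA : HasEPPA K) (hJEP : JEP K) :
    Amalgamation K := by
  intro na n1 n2 A B1 B2 α1 α2 _ hB1 hB2
  obtain ⟨q, D, hD, ⟨j1⟩, ⟨j2⟩⟩ := hJEP B1 B2 hB1 hB2
  obtain ⟨p, C, β1, β2, hC, hβ⟩ := hEPPA.exists_embeddings_comp_eq hD (j1.comp α1) (j2.comp α2)
  exact ⟨p, C, β1.comp j1, β2.comp j2, hC, hβ⟩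

/-- every hereditary isomorphism-closed class of finite graphs with EPPA
and the joint embedding property has the amalgamation property. -/
theorem eppa_jep_implies_amalgamation (K : GClass)
    (hHer : Hereditary K) (hIso : IsoClosed K)
    (hEPPA : HasEPPA K) (hJEP : JEP K) :
    Amalgamation K :=
  eppa_jep_implies_amalgamation_general K hEPPA hJEP
end

section
/- Every hereditary, isomorphism-closed Ramsey class of finite graphs with the joint embedding property has the amalgamation property. -/
/-!
Jointly embed `B₁` and `B₂` into some `D ∈ K` and take `C ∈ K` Ramsey for `A` and `D` with two
colours, colouring a copy of `A` in `C` by whether it extends along `α₁` to a copy of `B₁`. On a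
copy of `D` in `C` on which the colouring is constant, the copy of `A` through `B₁` extends, hence
so does the copy of `A` through `B₂`; that extension and the copy of `B₂` amalgamate over `A`.
-/

open SimpleGraph

/-- `K` is a Ramsey class: for all `A, B ∈ K` and `k ≥ 1` there is `C ∈ K` such that every
`k`-colouring of the embeddings of `A` into `C` admits an embedding `f : B ↪g C` on whose
copy of `B` all embeddings of `A` get the same colour. -/
def IsRamsey (K : GClass) : Prop :=
  ∀ {na nb : ℕ} (A : SimpleGraph (Fin na)) (B : SimpleGraph (Fin nb)) (k : ℕ),
    K na A → K nb B → 0 < k →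
    ∃ (p : ℕ) (C : SimpleGraph (Fin p)), K p C ∧
      ∀ χ : (A ↪g C) → Fin k, ∃ f : B ↪g C,
        ∀ e1 e2 : A ↪g B, χ (f.comp e1) = χ (f.comp e2)

theorem IsRamsey.exists_forall_comp_iff {K : GClass} (hR : IsRamsey K) {na nb : ℕ}
    (A : SimpleGraph (Fin na)) (B : SimpleGraph (Fin nb)) (hA : K na A) (hB : K nb B) :
    ∃ (p : ℕ) (C : SimpleGraph (Fin p)), K p C ∧
      ∀ P : (A ↪g C) → Prop, ∃ f : B ↪g C,
        ∀ e₁ e₂ : A ↪g B, P (f.comp e₁) ↔ P (f.comp e₂) := by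
  obtain ⟨p, C, hC, hcol⟩ := hR A B 2 hA hB two_pos
  refine ⟨p, C, hC, fun P => ?_⟩
  classical
  obtain ⟨f, hf⟩ := hcol fun e => if P e then 1 else 0
  refine ⟨f, fun e₁ e₂ => ?_⟩
  have hcolour := hf e₁ e₂
  split_ifs at hcolour <;> simp_all

theorem ramsey_jep_implies_amalgamation_general (K : GClass)
    (hRamsey : IsRamsey K) (hJEP : JEP K) :
    Amalgamation K := by
  intro na n₁ n₂ A B₁ B₂ α₁ α₂ hA hB₁ hB₂
  obtain ⟨q, D, hD, ⟨j₁⟩, ⟨j₂⟩⟩ := hJEP B₁ B₂ hB₁ hB₂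
  obtain ⟨p, C, hC, hhom⟩ := hRamsey.exists_forall_comp_iff A D hA hD
  obtain ⟨f, hf⟩ := hhom fun e => ∃ g : B₁ ↪g C, ∀ a, g (α₁ a) = e a
  have hext₁ : ∃ g : B₁ ↪g C, ∀ a, g (α₁ a) = f.comp (j₁.comp α₁) a :=
    ⟨f.comp j₁, fun _ => rfl⟩
  obtain ⟨g, hg⟩ := (hf (j₁.comp α₁) (j₂.comp α₂)).mp hext₁
  exact ⟨p, C, g, f.comp j₂, hC, hg⟩

/-- every hereditary, isomorphism-closed Ramsey class of finite graphs with the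
joint embedding property has the amalgamation property. -/
theorem ramsey_jep_implies_amalgamation (K : GClass)
    (hHer : Hereditary K) (hIso : IsoClosed K)
    (hRamsey : IsRamsey K) (hJEP : JEP K) :
    Amalgamation K :=
  ramsey_jep_implies_amalgamation_general K hRamsey hJEP
end

section
/- If a hereditary isomorphism-closed class K of finite graphs is Ramsey (for embedding colourings), then every graph in K is rigid, i.e., has no nontrivial automorphism. -/
/-!
Order the embeddings `A ↪g C` linearly and colour `e` by whether `e < e ∘ g`, for a
nontrivial automorphism `g` of `A`. Inside any copy `f : A ↪g C` the embeddings `f ∘ h`,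
`h : A ↪g A`, form a finite set on which `e ↦ e ∘ g` has no fixed point; its least element
goes up under this map and its greatest goes down, so the two receive different colours.
-/

open SimpleGraph

/-- `K` is Ramsey for 2-colourings of embeddings. -/
def IsRamsey2 (K : GClass) : Prop :=
  ∀ {na nb : ℕ} (A : SimpleGraph (Fin na)) (B : SimpleGraph (Fin nb)),
    K na A → K nb B →
    ∃ (p : ℕ) (C : SimpleGraph (Fin p)), K p C ∧
      ∀ χ : (A ↪g C) → Fin 2, ∃ f : B ↪g C,
        ∀ e1 e2 : A ↪g B, χ (f.comp e1) = χ (f.comp e2)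

theorem Set.exists_lt_apply_and_apply_lt_of_mapsTo {α β : Type*} [LinearOrder β] {s : Set α}
    (hs : s.Finite) (hne : s.Nonempty) (φ : α → β) {σ : α → α} (hσ : Set.MapsTo σ s s)
    (hmove : ∀ x ∈ s, φ (σ x) ≠ φ x) :
    (∃ x ∈ s, φ x < φ (σ x)) ∧ ∃ y ∈ s, φ (σ y) < φ y := by
  obtain ⟨x, hx, hmin⟩ := s.exists_min_image φ hs hne
  obtain ⟨y, hy, hmax⟩ := s.exists_max_image φ hs hne
  exact ⟨⟨x, hx, (hmin _ (hσ hx)).lt_of_ne' (hmove x hx)⟩,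
    ⟨y, hy, (hmax _ (hσ hy)).lt_of_ne (hmove y hy)⟩⟩

namespace SimpleGraph.Embedding

variable {V W : Type*} {A : SimpleGraph V}

instance [Finite V] [Finite W] {C : SimpleGraph W} : Finite (A ↪g C) :=
  Finite.of_injective _ DFunLike.coe_injective

instance [Finite V] [Countable W] {C : SimpleGraph W} : Countable (A ↪g C) :=
  DFunLike.coe_injective.countable

theorem comp_toEmbedding_ne_self {C : SimpleGraph W} (e : A ↪g C) {g : A ≃g A} (hg : g ≠ 1) :
    e.comp g.toEmbedding ≠ e := by
  intro h
  apply hg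
  ext v
  exact e.injective (congrArg (· v) h)

theorem exists_colouring_forall_exists_comp_ne [Finite V] [Countable W] {g : A ≃g A}
    (hg : g ≠ 1) (C : SimpleGraph W) :
    ∃ χ : (A ↪g C) → Fin 2, ∀ f : A ↪g C, ∃ e₁ e₂ : A ↪g A, χ (f.comp e₁) ≠ χ (f.comp e₂) := by
  obtain ⟨enc, henc⟩ := Countable.exists_injective_nat (A ↪g C)
  refine ⟨fun e ↦ if enc e < enc (e.comp g.toEmbedding) then 0 else 1, fun f ↦ ?_⟩
  have hmaps : Set.MapsTo (fun e ↦ e.comp g.toEmbedding) (Set.range f.comp)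
      (Set.range f.comp) := by
    rintro _ ⟨h, rfl⟩
    exact ⟨h.comp g.toEmbedding, rfl⟩
  obtain ⟨⟨_, ⟨e₁, rfl⟩, hup⟩, _, ⟨e₂, rfl⟩, hdown⟩ :=
    Set.exists_lt_apply_and_apply_lt_of_mapsTo (Set.toFinite _) (Set.range_nonempty _) enc
      hmaps fun e _ ↦ henc.ne (e.comp_toEmbedding_ne_self hg)
  refine ⟨e₁, e₂, ?_⟩
  simp only [if_pos hup, if_neg hdown.not_gt]
  decide

end SimpleGraph.Embedding

theorem ramsey_implies_rigid_general (K : GClass)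
    (hRamsey : IsRamsey2 K) :
    ∀ {n : ℕ} (A : SimpleGraph (Fin n)), K n A → ∀ (g : A ≃g A) (v : Fin n), g v = v := by
  intro n A hA g v
  by_contra hv
  have hg : g ≠ 1 := fun h ↦ hv (by rw [h]; rfl)
  obtain ⟨p, C, -, hmono⟩ := hRamsey A A hA hA
  obtain ⟨χ, hχ⟩ := Embedding.exists_colouring_forall_exists_comp_ne hg C
  obtain ⟨f, hf⟩ := hmono χ
  obtain ⟨e₁, e₂, hne⟩ := hχ f
  exact hne (hf e₁ e₂)

/-- if a hereditary isomorphism-closed class of finite graphs is Ramsey for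
embedding colourings, then every graph in the class is rigid (its only automorphism is the
identity). -/
theorem ramsey_implies_rigid (K : GClass)
    (hHer : Hereditary K) (hIso : IsoClosed K) (hRamsey : IsRamsey2 K) :
    ∀ {n : ℕ} (A : SimpleGraph (Fin n)), K n A → ∀ (g : A ≃g A) (v : Fin n), g v = v :=
  ramsey_implies_rigid_general K hRamsey
end

section
/- For every free amalgamation class K of finite graphs there exists a family F of finite graphs, each of which is connected (irreducible), such that K is exactly the class of finite graphs A into which no member of F embeds as an induced subgraph. -/
/-!
Take `F` to be the minimal graphs outside `K`. A free amalgamation of two proper induced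
subgraphs of such a graph would lie in `K`, so each one is irreducible. A graph in `K` cannot
contain one since `K` is hereditary, and a graph outside `K` contains one: descend to a proper
induced subgraph outside `K` as long as there is one.
-/

open SimpleGraph

/-- A class of finite graphs (over arbitrary finite vertex types). -/
abbrev FClass := ∀ (V : Type) [Fintype V], SimpleGraph V → Prop

def FHereditary (K : FClass) : Prop :=
  ∀ (V W : Type) [Fintype V] [Fintype W] (A : SimpleGraph V) (B : SimpleGraph W),
    K V A → Nonempty (B ↪g A) → K W B

def FIsoClosed (K : FClass) : Prop :=
  ∀ (V W : Type) [Fintype V] [Fintype W] (A : SimpleGraph V) (B : SimpleGraph W),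
    K V A → Nonempty (A ≃g B) → K W B

/-- `K` is closed under free amalgamation: if the vertex set of `C` is covered by `s` and `t`,
there are no edges between `s \ t` and `t \ s`, and the induced subgraphs on `s` and `t`
belong to `K`, then `C ∈ K`. -/
def FreeAmalgClosed (K : FClass) : Prop :=
  ∀ (V : Type) [Fintype V] (C : SimpleGraph V) (s t : Finset V),
    (↑s ∪ ↑t : Set V) = Set.univ →
    (∀ x y, x ∈ s → x ∉ t → y ∈ t → y ∉ s → ¬ C.Adj x y) →
    K _ (C.induce ↑s) → K _ (C.induce ↑t) → K V C

/-- A graph is irreducible if it is not the free amalgamation of two proper induced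
subgraphs. -/
def GIrreducible {V : Type} (C : SimpleGraph V) : Prop :=
  ¬ ∃ s t : Set V, s ∪ t = Set.univ ∧ s ≠ Set.univ ∧ t ≠ Set.univ ∧
      ∀ x ∈ s \ t, ∀ y ∈ t \ s, ¬ C.Adj x y

def minimalNonMembers (K : FClass) : FClass :=
  fun W _ G => ¬ K W G ∧ ∀ u : Finset W, (u : Set W) ≠ Set.univ → K _ (G.induce u)

theorem gIrreducible_of_minimalNonMembers {K : FClass} (hFree : FreeAmalgClosed K)
    {W : Type} [Fintype W] {G : SimpleGraph W} (hG : minimalNonMembers K W G) :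
    GIrreducible G := by
  rintro ⟨s, t, hcover, hs, ht, hcross⟩
  obtain ⟨hGK, hproper⟩ := hG
  have hsf := Set.toFinite s
  have htf := Set.toFinite t
  refine hGK (hFree W G hsf.toFinset htf.toFinset ?_ ?_ ?_ ?_)
  · simpa only [Set.Finite.coe_toFinset] using hcover
  · simp only [Set.Finite.mem_toFinset]
    exact fun x y hx hxt hy hys => hcross x ⟨hx, hxt⟩ y ⟨hy, hys⟩
  · exact hproper _ (by simpa only [Set.Finite.coe_toFinset] using hs)
  · exact hproper _ (by simpa only [Set.Finite.coe_toFinset] using ht)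

theorem exists_minimalNonMembers_embedding {K : FClass} {V : Type} [Fintype V]
    {A : SimpleGraph V} (hA : ¬ K V A) :
    ∃ (W : Type) (_ : Fintype W) (G : SimpleGraph W),
      minimalNonMembers K W G ∧ Nonempty (G ↪g A) := by
  induction hn : Fintype.card V using Nat.strong_induction_on generalizing V with
  | _ n ih =>
    by_cases hmin : ∀ u : Finset V, (u : Set V) ≠ Set.univ → K _ (A.induce u)
    · exact ⟨V, inferInstance, A, ⟨hA, hmin⟩, ⟨Embedding.refl⟩⟩
    push Not at hmin
    obtain ⟨u, hu, huK⟩ := hmin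
    obtain ⟨x, hx⟩ := Set.ne_univ_iff_exists_notMem _ |>.mp hu
    have hcard : Fintype.card (u : Set V) < n := hn ▸ Fintype.card_subtype_lt hx
    obtain ⟨W, _, G, hG, ⟨f⟩⟩ := ih _ hcard huK rfl
    exact ⟨W, inferInstance, G, hG, ⟨(Embedding.induce _).comp f⟩⟩

theorem isEmpty_embedding_of_minimalNonMembers {K : FClass} (hHer : FHereditary K)
    {V W : Type} [Fintype V] [Fintype W] {A : SimpleGraph V} {G : SimpleGraph W}
    (hA : K V A) (hG : minimalNonMembers K W G) : IsEmpty (G ↪g A) :=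
  ⟨fun f => hG.1 (hHer V W A G hA ⟨f⟩)⟩

theorem free_amalg_class_eq_forb_general (K : FClass)
    (hHer : FHereditary K) (hFree : FreeAmalgClosed K) :
    ∃ F : FClass,
      (∀ (V : Type) [Fintype V] (G : SimpleGraph V), F V G → GIrreducible G) ∧
      (∀ (V : Type) [Fintype V] (A : SimpleGraph V),
        K V A ↔ ∀ (W : Type) [Fintype W] (Fg : SimpleGraph W), F W Fg → IsEmpty (Fg ↪g A)) := by
  refine ⟨minimalNonMembers K, fun _ _ _ => gIrreducible_of_minimalNonMembers hFree,
    fun V _ A => ⟨fun hA W _ G => isEmpty_embedding_of_minimalNonMembers hHer hA, ?_⟩⟩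
  intro hforb
  by_contra hA
  obtain ⟨W, _, G, hG, ⟨f⟩⟩ := exists_minimalNonMembers_embedding hA
  exact (hforb W G hG).false f

/-- for every free amalgamation class `K` of finite graphs there is a family `F`
of irreducible finite graphs such that `K` is exactly the class of finite graphs into which
no member of `F` embeds as an induced subgraph. -/
theorem free_amalg_class_eq_forb (K : FClass)
    (hHer : FHereditary K) (hIso : FIsoClosed K) (hFree : FreeAmalgClosed K) :
    ∃ F : FClass,
      (∀ (V : Type) [Fintype V] (G : SimpleGraph V), F V G → GIrreducible G) ∧
      (∀ (V : Type) [Fintype V] (A : SimpleGraph V),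
        K V A ↔ ∀ (W : Type) [Fintype W] (Fg : SimpleGraph W), F W Fg → IsEmpty (Fg ↪g A)) :=
  free_amalg_class_eq_forb_general K hHer hFree
end

section
/- Every partial injection on a finite set extends to a permutation of that set; moreover, the extension can be chosen coherently: there is a map φ from partial injections of a finite set X to permutations of X such that φ(f) extends f and φ sends coherent triples to coherent triples. -/
/-- A partial bijection (partial injection) of a set `X`. -/
structure PartialBij (X : Type) where
  dom : Set X
  ran : Set X
  toFun : X → X
  maps_to : ∀ x ∈ dom, toFun x ∈ ran
  injOn : Set.InjOn toFun dom
  surjOn : ran ⊆ toFun '' dom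

/-- A coherent triple `(f, g, h)` of partial bijections. -/
def CoherentTriple {X : Type} (f g h : PartialBij X) : Prop :=
  f.dom = h.dom ∧ f.ran = g.dom ∧ g.ran = h.ran ∧
    ∀ x ∈ f.dom, h.toFun x = g.toFun (f.toFun x)

/-!
Fix a linear order on `X` and extend a partial bijection `f` off its domain by the order
isomorphism `(dom f)ᶜ ≃o (ran f)ᶜ` (the complements have the same size). For a coherent triple
`(f, g, h)`, the map `φ g ∘ φ f` agrees with `h` on `dom h` and sends `(dom h)ᶜ` strictly
monotonically into `(ran h)ᶜ`; there is only one such map between finite linear orders of the same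
size, namely the one used to define `φ h`.
-/

open Set

noncomputable def OrderIso.ofNatCardEq {α β : Type*} [LinearOrder α] [LinearOrder β] [Finite α]
    [Finite β] (h : Nat.card α = Nat.card β) : α ≃o β :=
  letI := Fintype.ofFinite α
  letI := Fintype.ofFinite β
  (monoEquivOfFin α rfl).symm.trans
    (monoEquivOfFin β (Nat.card_eq_fintype_card.symm.trans (h.symm.trans Nat.card_eq_fintype_card)))

theorem StrictMonoOn.eqOn_of_mapsTo {X : Type*} [LinearOrder X] {s t : Set X} [Finite t]
    (hst : Nat.card t ≤ Nat.card s) {u v : X → X} (hu : StrictMonoOn u s) (hut : MapsTo u s t)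
    (hv : StrictMonoOn v s) (hvt : MapsTo v s t) : EqOn u v s := by
  have hu' : StrictMono (hut.restrict u s t) := fun x y hxy => hu x.2 y.2 hxy
  have hv' : StrictMono (hvt.restrict v s t) := fun x y hxy => hv x.2 y.2 hxy
  intro x hx
  exact congrArg (fun e : s ≃o t => (e ⟨x, hx⟩ : X)) <| Subsingleton.elim
    (hu'.orderIsoOfSurjective _ (hu'.injective.bijective_of_nat_card_le hst).2)
    (hv'.orderIsoOfSurjective _ (hv'.injective.bijective_of_nat_card_le hst).2)

namespace PartialBij

variable {X : Type}

theorem bijOn (f : PartialBij X) : BijOn f.toFun f.dom f.ran :=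
  ⟨f.maps_to, f.injOn, f.surjOn⟩

theorem natCard_compl_dom_eq [Finite X] (f : PartialBij X) :
    Nat.card ↥f.domᶜ = Nat.card ↥f.ranᶜ := by
  have hcard : f.dom.ncard = f.ran.ncard := f.bijOn.image_eq ▸ f.injOn.ncard_image.symm
  rw [Nat.card_coe_set_eq, Nat.card_coe_set_eq, ncard_compl f.dom, ncard_compl f.ran, hcard]

variable [LinearOrder X] [Finite X]

open scoped Classical

noncomputable def complOrderIso (f : PartialBij X) : ↥f.domᶜ ≃o ↥f.ranᶜ :=
  OrderIso.ofNatCardEq f.natCard_compl_dom_eq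

noncomputable def toPerm (f : PartialBij X) : Equiv.Perm X :=
  (Equiv.Set.sumCompl f.dom).symm.trans
    ((Equiv.sumCongr (f.bijOn.equiv f.toFun) f.complOrderIso.toEquiv).trans
      (Equiv.Set.sumCompl f.ran))

theorem toPerm_apply_of_mem (f : PartialBij X) {x : X} (hx : x ∈ f.dom) :
    f.toPerm x = f.toFun x := by
  simp only [toPerm, Equiv.trans_apply, Equiv.Set.sumCompl_symm_apply_of_mem hx,
    Equiv.sumCongr_apply, Sum.map_inl]
  rfl

theorem toPerm_apply_of_notMem (f : PartialBij X) {x : X} (hx : x ∉ f.dom) :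
    f.toPerm x = f.complOrderIso ⟨x, hx⟩ := by
  simp only [toPerm, Equiv.trans_apply, Equiv.Set.sumCompl_symm_apply_of_notMem hx,
    Equiv.sumCongr_apply, Sum.map_inr, Equiv.Set.sumCompl_apply_inr, RelIso.coe_fn_toEquiv]

theorem mapsTo_toPerm_compl (f : PartialBij X) : MapsTo f.toPerm f.domᶜ f.ranᶜ := fun x hx => by
  rw [f.toPerm_apply_of_notMem hx]
  exact (f.complOrderIso ⟨x, hx⟩).2

theorem strictMonoOn_toPerm_compl (f : PartialBij X) : StrictMonoOn f.toPerm f.domᶜ :=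
  fun x hx y hy hxy => by
    rw [f.toPerm_apply_of_notMem hx, f.toPerm_apply_of_notMem hy]
    exact f.complOrderIso.strictMono (show (⟨x, hx⟩ : ↥f.domᶜ) < ⟨y, hy⟩ from hxy)

end PartialBij

open PartialBij in
theorem CoherentTriple.toPerm_eq_trans {X : Type} [LinearOrder X] [Finite X]
    {f g h : PartialBij X} (hc : CoherentTriple f g h) : h.toPerm = f.toPerm.trans g.toPerm := by
  obtain ⟨hdom, hmid, hran, hcomp⟩ := hc
  ext x
  by_cases hx : x ∈ f.dom
  · rw [Equiv.trans_apply, toPerm_apply_of_mem h (hdom ▸ hx), hcomp x hx,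
      toPerm_apply_of_mem f hx, toPerm_apply_of_mem g (hmid ▸ f.maps_to x hx)]
  · have hf : MapsTo f.toPerm h.domᶜ g.domᶜ := hdom ▸ hmid ▸ f.mapsTo_toPerm_compl
    have hf_mono : StrictMonoOn f.toPerm h.domᶜ := hdom ▸ f.strictMonoOn_toPerm_compl
    have hgf : MapsTo (g.toPerm ∘ f.toPerm) h.domᶜ h.ranᶜ := hran ▸ g.mapsTo_toPerm_compl.comp hf
    exact StrictMonoOn.eqOn_of_mapsTo h.natCard_compl_dom_eq.ge h.strictMonoOn_toPerm_compl
      h.mapsTo_toPerm_compl (g.strictMonoOn_toPerm_compl.comp hf_mono hf) hgf (hdom ▸ hx)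

theorem coherent_extension_of_partial_injections_general (X : Type) [Fintype X] :
    ∃ φ : PartialBij X → Equiv.Perm X,
      (∀ f : PartialBij X, ∀ x ∈ f.dom, φ f x = f.toFun x) ∧
      (∀ f g h : PartialBij X, CoherentTriple f g h →
        ∀ x : X, φ h x = φ g (φ f x)) := by
  let : LinearOrder X := LinearOrder.lift' (Fintype.equivFin X) (Fintype.equivFin X).injective
  exact ⟨PartialBij.toPerm, fun f _ hx => f.toPerm_apply_of_mem hx,
    fun f g h hc x => by rw [hc.toPerm_eq_trans, Equiv.trans_apply]⟩

/-- every partial injection of a finite set extends to a permutation, and the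
extension can be chosen coherently: there is a map `φ` from partial injections of `X` to
permutations of `X` such that `φ f` extends `f`, and whenever `(f, g, h)` is a coherent
triple, `φ h = φ g ∘ φ f`. -/
theorem coherent_extension_of_partial_injections (X : Type) [Fintype X] [DecidableEq X] :
    ∃ φ : PartialBij X → Equiv.Perm X,
      (∀ f : PartialBij X, ∀ x ∈ f.dom, φ f x = f.toFun x) ∧
      (∀ f g h : PartialBij X, CoherentTriple f g h →
        ∀ x : X, φ h x = φ g (φ f x)) :=
  coherent_extension_of_partial_injections_general X
end

section
/- The class of all finite graphs that are disjoint unions of at most n cliques (for a fixed finite n ≥ 2) does not have the amalgamation property with automorphisms (APA): the amalgamation of an n-vertex edgeless graph and a 2-vertex edgeless graph over the empty graph cannot be completed so that all compatible automorphism pairs extend. -/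
/-!
Take `A` empty, `B1` the edgeless graph on `n` vertices and `B2` the edgeless graph on two
vertices. In an amalgam `C` that is a union of at most `n` cliques, the `n` vertices of `B1` lie
in pairwise distinct cliques, so they meet every clique; in particular some vertex `v` of `B1`
shares a clique with the first vertex of `B2`. The automorphism pair (identity on `B1`, swap on
`B2`) would extend to an automorphism of `C` fixing `v`, hence mapping `v`'s clique to itself,
yet it moves the first vertex of `B2` to the second, which lies in a different clique.
-/

open SimpleGraph

/-- The amalgamation property with automorphisms (APA): any amalgamation situation has a
solution `C` such that every compatible pair of automorphisms of `B1` and `B2` (preserving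
the image of `A` setwise and agreeing on `A`) extends to a common automorphism of `C`. -/
def HasAPA (K : GClass) : Prop :=
  ∀ {na n1 n2 : ℕ} (A : SimpleGraph (Fin na)) (B1 : SimpleGraph (Fin n1))
    (B2 : SimpleGraph (Fin n2)) (α1 : A ↪g B1) (α2 : A ↪g B2),
    K na A → K n1 B1 → K n2 B2 →
    ∃ (p : ℕ) (C : SimpleGraph (Fin p)) (β1 : B1 ↪g C) (β2 : B2 ↪g C),
      K p C ∧ (∀ a, β1 (α1 a) = β2 (α2 a)) ∧
      ∀ (f1 : B1 ≃g B1) (f2 : B2 ≃g B2),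
        (∀ a, ∃ a', f1 (α1 a) = α1 a') →
        (∀ a, ∃ a', f2 (α2 a) = α2 a') →
        (∀ a a', f1 (α1 a) = α1 a' → f2 (α2 a) = α2 a') →
        ∃ g : C ≃g C, (∀ x, g (β1 x) = β1 (f1 x)) ∧ (∀ x, g (β2 x) = β2 (f2 x))

/-- The class of finite graphs which are disjoint unions of at most `n` cliques: the vertex
set partitions into at most `n` cliques with no edges between them. -/
def UnionOfCliques (n : ℕ) : GClass :=
  fun m G => ∃ c : Fin m → Fin n, ∀ x y : Fin m, x ≠ y → (G.Adj x y ↔ c x = c y)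

namespace SimpleGraph

def Embedding.ofIsEmpty {V W : Type*} [IsEmpty V] {G : SimpleGraph V} {H : SimpleGraph W} :
    G ↪g H :=
  ⟨⟨isEmptyElim, fun a => isEmptyElim a⟩, fun {a} => isEmptyElim a⟩

def IsCliqueLabeling {V ι : Type*} (G : SimpleGraph V) (c : V → ι) : Prop :=
  ∀ x y, x ≠ y → (G.Adj x y ↔ c x = c y)

namespace IsCliqueLabeling

variable {V ι : Type*} {G : SimpleGraph V} {c : V → ι}

theorem injective_comp_of_bot_embedding (hc : G.IsCliqueLabeling c) {W : Type*}
    (f : (⊥ : SimpleGraph W) ↪g G) : Function.Injective (c ∘ f) := by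
  intro x y hxy
  by_contra hne
  exact (f.map_adj_iff.mp ((hc _ _ (f.injective.ne hne)).2 hxy)).elim

theorem label_apply_eq_of_apply_eq_self (hc : G.IsCliqueLabeling c) (g : G ≃g G) {v w : V}
    (hv : g v = v) (hvw : c v = c w) : c (g w) = c w := by
  by_cases hvw' : v = w
  · rw [← hvw', hv]
  · have hadj : G.Adj v (g w) := by
      simpa only [hv] using g.map_adj_iff.mpr ((hc v w hvw').2 hvw)
    rw [← hvw]
    exact ((hc _ _ hadj.ne).1 hadj).symm

end IsCliqueLabeling

end SimpleGraph

theorem unionOfCliques_bot {m n : ℕ} (h : m ≤ n) : UnionOfCliques n m ⊥ :=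
  ⟨Fin.castLE h, fun _ _ hxy => by simpa using (Fin.castLE_injective h).ne hxy⟩

/-- for fixed finite `n ≥ 2`, the class of finite graphs that are disjoint
unions of at most `n` cliques does not have APA. -/
theorem unionOfCliques_not_apa (n : ℕ) (hn : 2 ≤ n) :
    ¬ HasAPA (UnionOfCliques n) := by
  intro h
  obtain ⟨p, C, β1, β2, ⟨c, hc⟩, -, hext⟩ :=
    h (⊥ : SimpleGraph (Fin 0)) (⊥ : SimpleGraph (Fin n)) (⊥ : SimpleGraph (Fin 2))
      .ofIsEmpty .ofIsEmpty (unionOfCliques_bot (Nat.zero_le n)) (unionOfCliques_bot le_rfl)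
      (unionOfCliques_bot hn)
  have hc : C.IsCliqueLabeling c := hc
  obtain ⟨k, hk⟩ := Finite.surjective_of_injective (hc.injective_comp_of_bot_embedding β1)
    (c (β2 0))
  obtain ⟨g, hg1, hg2⟩ := hext Iso.refl ⟨Equiv.swap 0 1, by simp⟩
    (fun a => a.elim0) (fun a => a.elim0) (fun a => a.elim0)
  have hswap : c (g (β2 0)) = c (β2 0) := hc.label_apply_eq_of_apply_eq_self g (hg1 k) hk
  rw [hg2] at hswap
  exact absurd (hc.injective_comp_of_bot_embedding β2 hswap) (by decide)
end

section
/- Let K be a hereditary Ramsey class of finite ordered graphs whose Fraïssé limit is U, let A be a finite substructure of U, and let φ be a quantifier-free equivalence formula on copies of A in U. Then φ has either one or infinitely many equivalence classes. -/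
open SimpleGraph

/-- A class of finite ordered graphs: graphs on `Fin n` carrying the natural linear order. -/
abbrev OClass := ∀ n : ℕ, SimpleGraph (Fin n) → Prop

/-- An embedding of a finite ordered graph `G` (on `Fin n` with its natural order) into an
ordered graph `U` on a linearly ordered vertex set: an injective map preserving both the
order and adjacency (in the induced sense). -/
structure OrdEmb {n : ℕ} (G : SimpleGraph (Fin n)) {V : Type} [LinearOrder V]
    (U : SimpleGraph V) where
  toFun : Fin n → V
  strictMono : StrictMono toFun
  adj_iff : ∀ a b : Fin n, U.Adj (toFun a) (toFun b) ↔ G.Adj a b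

/-- Composition of ordered embeddings of finite ordered graphs. -/
def OrdEmb.comp {n m : ℕ} {G : SimpleGraph (Fin n)} {H : SimpleGraph (Fin m)}
    {V : Type} [LinearOrder V] {U : SimpleGraph V}
    (f : OrdEmb H U) (e : OrdEmb G H) : OrdEmb G U where
  toFun := f.toFun ∘ e.toFun
  strictMono := f.strictMono.comp e.strictMono
  adj_iff := fun a b => (f.adj_iff _ _).trans (e.adj_iff a b)

/-- `K` is hereditary (for ordered graphs). -/
def OHereditary (K : OClass) : Prop :=
  ∀ {n m : ℕ} (A : SimpleGraph (Fin n)) (B : SimpleGraph (Fin m)),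
    K n A → Nonempty (OrdEmb B A) → K m B

/-- `K` is a Ramsey class of finite ordered graphs. -/
def ORamsey (K : OClass) : Prop :=
  ∀ {na nb : ℕ} (A : SimpleGraph (Fin na)) (B : SimpleGraph (Fin nb)) (k : ℕ),
    K na A → K nb B → 0 < k →
    ∃ (p : ℕ) (C : SimpleGraph (Fin p)), K p C ∧
      ∀ χ : OrdEmb A C → Fin k, ∃ f : OrdEmb B C,
        ∀ e1 e2 : OrdEmb A B, χ (f.comp e1) = χ (f.comp e2)

/-! If `φ` has finitely many classes, colour each copy of `A` by its class. Two inequivalent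
copies `a`, `b` span a finite substructure `B` of `U`, and Ramsey's property yields a copy of
`B` on which all copies of `A` get the same colour. Inside that copy, the images of `a` and `b`
have the quantifier-free type of the pair `(a, b)`, so quantifier-freeness of `φ` makes them
inequivalent, although they have the same class. -/

section PartialEquivalence

variable {α : Type*} (φ : α → α → Prop) [Std.Symm φ] [IsTrans α φ]

/-- The quotient by this setoid is the set of `φ`-classes. -/
def domSetoid : Setoid {a // φ a a} where
  r x y := φ x y
  iseqv := ⟨fun x => x.2, Std.Symm.symm _ _, IsTrans.trans _ _ _⟩

theorem exists_pairwise_not_rel_of_infinite [Infinite (Quotient (domSetoid φ))] (m : ℕ) :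
    ∃ f : Fin m → α, (∀ i, φ (f i) (f i)) ∧ ∀ i j, i ≠ j → ¬ φ (f i) (f j) := by
  let g := Infinite.natEmbedding (Quotient (domSetoid φ))
  refine ⟨fun i => (g i).out.1, fun i => (g i).out.2, fun i j hij hφ => hij ?_⟩
  have hg : g i = g j := by
    rw [← Quotient.out_eq (g i), ← Quotient.out_eq (g j)]
    exact Quotient.sound hφ
  exact Fin.ext (g.injective hg)

end PartialEquivalence

section OrderedGraphs

variable {V : Type} [LinearOrder V] {U : SimpleGraph V}

def SameQFType (U : SimpleGraph V) {ι : Type*} (x y : ι → V) : Prop :=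
  ∀ i j, (x i = x j ↔ y i = y j) ∧ (U.Adj (x i) (x j) ↔ U.Adj (y i) (y j)) ∧
    (x i ≤ x j ↔ y i ≤ y j)

theorem OrdEmb.sameQFType_comp {nb : ℕ} {B : SimpleGraph (Fin nb)} (f g : OrdEmb B U)
    {ι : Type*} (z : ι → Fin nb) : SameQFType U (f.toFun ∘ z) (g.toFun ∘ z) := fun i j => by
  simp only [Function.comp_apply, f.strictMono.injective.eq_iff, g.strictMono.injective.eq_iff,
    f.adj_iff, g.adj_iff, f.strictMono.le_iff_le, g.strictMono.le_iff_le, and_self]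

theorem OrdEmb.exists_comp_eq_of_range_subset {n m : ℕ} {G : SimpleGraph (Fin n)}
    {H : SimpleGraph (Fin m)} (j : OrdEmb H U) (e : OrdEmb G U)
    (h : Set.range e.toFun ⊆ Set.range j.toFun) :
    ∃ e' : OrdEmb G H, (j.comp e').toFun = e.toFun := by
  choose e' he' using fun i => h ⟨i, rfl⟩
  refine ⟨⟨e', fun i i' hii' => ?_, fun i i' => ?_⟩, funext he'⟩
  · rw [← j.strictMono.lt_iff_lt, he', he']
    exact e.strictMono hii'
  · rw [← j.adj_iff, he', he', e.adj_iff]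

noncomputable def inducedOn (U : SimpleGraph V) (s : Finset V) : SimpleGraph (Fin s.card) :=
  U.comap (s.orderEmbOfFin rfl)

noncomputable def OrdEmb.ofFinset (U : SimpleGraph V) (s : Finset V) :
    OrdEmb (inducedOn U s) U where
  toFun := s.orderEmbOfFin rfl
  strictMono := (s.orderEmbOfFin rfl).strictMono
  adj_iff _ _ := Iff.rfl

theorem OrdEmb.exists_factor_through_common {n : ℕ} {G : SimpleGraph (Fin n)}
    (e₁ e₂ : OrdEmb G U) :
    ∃ (m : ℕ) (B : SimpleGraph (Fin m)) (j : OrdEmb B U) (e₁' e₂' : OrdEmb G B),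
      (j.comp e₁').toFun = e₁.toFun ∧ (j.comp e₂').toFun = e₂.toFun := by
  classical
  let s := Finset.univ.image e₁.toFun ∪ Finset.univ.image e₂.toFun
  have hrange : Set.range (OrdEmb.ofFinset U s).toFun = s := Finset.range_orderEmbOfFin s rfl
  obtain ⟨e₁', h₁⟩ := (OrdEmb.ofFinset U s).exists_comp_eq_of_range_subset e₁ <| by
    rintro _ ⟨i, rfl⟩; simp [hrange, s]
  obtain ⟨e₂', h₂⟩ := (OrdEmb.ofFinset U s).exists_comp_eq_of_range_subset e₂ <| by
    rintro _ ⟨i, rfl⟩; simp [hrange, s]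
  exact ⟨_, _, _, e₁', e₂', h₁, h₂⟩

theorem ORamsey.exists_monochromatic_copy {K : OClass} (hK : ORamsey K)
    (hAge : ∀ (n : ℕ) (G : SimpleGraph (Fin n)), K n G ↔ Nonempty (OrdEmb G U)) {na nb : ℕ}
    {A : SimpleGraph (Fin na)} {B : SimpleGraph (Fin nb)} (eA : OrdEmb A U) (eB : OrdEmb B U)
    {κ : Type*} [Finite κ] [Nonempty κ] (χ : OrdEmb A U → κ) :
    ∃ f : OrdEmb B U, ∀ e₁ e₂ : OrdEmb A B, χ (f.comp e₁) = χ (f.comp e₂) := by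
  obtain ⟨k, ⟨c⟩⟩ := Finite.exists_equiv_fin κ
  have hk : 0 < k := Fin.pos (c (Classical.arbitrary κ))
  obtain ⟨p, C, hC, hRamsey⟩ := hK A B k ((hAge _ _).2 ⟨eA⟩) ((hAge _ _).2 ⟨eB⟩) hk
  obtain ⟨g⟩ := (hAge p C).1 hC
  obtain ⟨f, hf⟩ := hRamsey fun e => c (χ (g.comp e))
  exact ⟨g.comp f, fun e₁ e₂ => c.injective (hf e₁ e₂)⟩

end OrderedGraphs

theorem equivalence_formula_one_or_infinitely_many_classes_general
    (K : OClass) (hRamsey : ORamsey K)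
    (V : Type) [LinearOrder V] (U : SimpleGraph V)
    -- `U` has age `K`:
    (hAge : ∀ (n : ℕ) (G : SimpleGraph (Fin n)), K n G ↔ Nonempty (OrdEmb G U))
    -- `A` is a finite substructure of `U`:
    (na : ℕ) (GA : SimpleGraph (Fin na))
    -- `φ` is an equivalence formula on copies of `A`:
    (φ : (Fin na → V) → (Fin na → V) → Prop)
    (hdom : ∀ a, φ a a ↔ ∃ e : OrdEmb GA U, e.toFun = a)
    (hsym : ∀ a b, φ a b → φ b a)
    (htrans : ∀ a b c, φ a b → φ b c → φ a c)
    -- `φ` is quantifier-free: it only depends on the quantifier-free type of the pair of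
    -- tuples (equalities, adjacencies and order between all coordinates):
    (hqf : ∀ a b a' b' : Fin na → V,
      (∀ i j : Fin na ⊕ Fin na,
        ((Sum.elim a b i = Sum.elim a b j) ↔ (Sum.elim a' b' i = Sum.elim a' b' j)) ∧
        (U.Adj (Sum.elim a b i) (Sum.elim a b j) ↔
          U.Adj (Sum.elim a' b' i) (Sum.elim a' b' j)) ∧
        ((Sum.elim a b i ≤ Sum.elim a b j) ↔ (Sum.elim a' b' i ≤ Sum.elim a' b' j))) →
      (φ a b ↔ φ a' b')) :
    -- `φ` has one equivalence class, or infinitely many: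
    (∀ a b, φ a a → φ b b → φ a b) ∨
      (∀ m : ℕ, ∃ f : Fin m → (Fin na → V),
        (∀ i, φ (f i) (f i)) ∧ ∀ i j, i ≠ j → ¬ φ (f i) (f j)) := by
  have : Std.Symm φ := ⟨hsym⟩
  have : IsTrans _ φ := ⟨htrans⟩
  rcases finite_or_infinite (Quotient (domSetoid φ)) with hfin | hinf
  · left
    intro a b ha hb
    obtain ⟨ea, rfl⟩ := (hdom a).1 ha
    obtain ⟨eb, rfl⟩ := (hdom b).1 hb
    obtain ⟨_, _, j, e₁, e₂, h₁, h₂⟩ := ea.exists_factor_through_common eb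
    have : Nonempty (Quotient (domSetoid φ)) := ⟨⟦⟨_, ha⟩⟧⟩
    obtain ⟨f, hf⟩ := hRamsey.exists_monochromatic_copy hAge ea j
      fun e => (⟦⟨e.toFun, (hdom _).2 ⟨e, rfl⟩⟩⟧ : Quotient (domSetoid φ))
    have hφ : φ (f.comp e₁).toFun (f.comp e₂).toFun := Quotient.exact (hf e₁ e₂)
    have htype := f.sameQFType_comp j (Sum.elim e₁.toFun e₂.toFun)
    rw [Sum.comp_elim, Sum.comp_elim] at htype
    rw [← h₁, ← h₂]
    exact (hqf _ _ _ _ htype).1 hφ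
  · exact Or.inr (exists_pairwise_not_rel_of_infinite φ)

/-- Let `K` be a hereditary Ramsey class of finite ordered graphs with Fraïssé
limit `U` (a countable homogeneous ordered graph whose age is `K`), let `A = GA` be a finite
substructure of `U` and let `φ` be a quantifier-free equivalence formula on copies of `A` in
`U` (an equivalence relation on tuples whose domain is exactly the enumerations of copies of
`A`, invariant under quantifier-free types). Then `φ` has either one or infinitely many
equivalence classes. -/
theorem equivalence_formula_one_or_infinitely_many_classes
    (K : OClass) (hHer : OHereditary K) (hRamsey : ORamsey K)
    (V : Type) [LinearOrder V] [Countable V] (U : SimpleGraph V)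
    -- `U` has age `K`:
    (hAge : ∀ (n : ℕ) (G : SimpleGraph (Fin n)), K n G ↔ Nonempty (OrdEmb G U))
    -- `U` is homogeneous:
    (hHomog : ∀ (n : ℕ) (G : SimpleGraph (Fin n)) (e1 e2 : OrdEmb G U),
      ∃ θ : V ≃ V, (∀ x y, U.Adj (θ x) (θ y) ↔ U.Adj x y) ∧
        (∀ x y, θ x ≤ θ y ↔ x ≤ y) ∧ ∀ a, θ (e1.toFun a) = e2.toFun a)
    -- `A` is a finite substructure of `U`:
    (na : ℕ) (GA : SimpleGraph (Fin na)) (hA : Nonempty (OrdEmb GA U))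
    -- `φ` is an equivalence formula on copies of `A`:
    (φ : (Fin na → V) → (Fin na → V) → Prop)
    (hdom : ∀ a, φ a a ↔ ∃ e : OrdEmb GA U, e.toFun = a)
    (hsym : ∀ a b, φ a b → φ b a)
    (htrans : ∀ a b c, φ a b → φ b c → φ a c)
    (hrefl : ∀ a b, φ a b → φ a a ∧ φ b b)
    -- `φ` is quantifier-free: it only depends on the quantifier-free type of the pair of
    -- tuples (equalities, adjacencies and order between all coordinates):
    (hqf : ∀ a b a' b' : Fin na → V,
      (∀ i j : Fin na ⊕ Fin na,
        ((Sum.elim a b i = Sum.elim a b j) ↔ (Sum.elim a' b' i = Sum.elim a' b' j)) ∧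
        (U.Adj (Sum.elim a b i) (Sum.elim a b j) ↔
          U.Adj (Sum.elim a' b' i) (Sum.elim a' b' j)) ∧
        ((Sum.elim a b i ≤ Sum.elim a b j) ↔ (Sum.elim a' b' i ≤ Sum.elim a' b' j))) →
      (φ a b ↔ φ a' b')) :
    -- `φ` has one equivalence class, or infinitely many:
    (∀ a b, φ a a → φ b b → φ a b) ∨
      (∀ m : ℕ, ∃ f : Fin m → (Fin na → V),
        (∀ i, φ (f i) (f i)) ∧ ∀ i j, i ≠ j → ¬ φ (f i) (f j)) :=
  equivalence_formula_one_or_infinitely_many_classes_general K hRamsey V U hAge na GA φ hdom hsym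
    htrans hqf
end

section
/- A structure with one symmetric binary relation interpreted as distances: a partial edge-labelled complete-graph-completable structure with labels in {1,2,3,4} has a completion to a metric space with distances in {1,2,3,4} if and only if it contains no non-metric triangle (labels 1-1-3, 1-1-4, or 1-2-4) and no 4-cycle labelled 1-1-1-4. -/
/-!
Give every undefined pair weight `4` and take the shortest-walk distance. As every edge weighs at
least `1` and the direct edge at most `4`, only walks with at most three edges matter, and the
result is a metric with values in `{1,2,3,4}`. It extends `d` unless some defined edge `xy` is beaten
by a shorter walk: a two-edge walk gives a non-metric triangle, and a three-edge walk must consist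
of three `1`s against `d x y = 4`, i.e. a forbidden 4-cycle.
-/

/-- `d'` is a completion of the partial distance function `d` with distances in `S`:
a total symmetric distance function on distinct pairs, with values in `S`, extending `d`
and satisfying the triangle inequality. -/
def IsCompletion {V : Type} (S : Set ℕ) (d : V → V → Option ℕ) (d' : V → V → ℕ) : Prop :=
  (∀ x y, d' x y = d' y x) ∧
  (∀ x y, x ≠ y → d' x y ∈ S) ∧
  (∀ x y v, d x y = some v → d' x y = v) ∧
  (∀ x y z : V, x ≠ y → y ≠ z → x ≠ z → d' x z ≤ d' x y + d' y z)

def nonMetricTriangles : Set (Multiset ℕ) := { {1, 1, 3}, {1, 1, 4}, {1, 2, 4} }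

theorem add_lt_of_mem_nonMetricTriangles {a b c : ℕ}
    (h : ({a, b, c} : Multiset ℕ) ∈ nonMetricTriangles) : a + b < c ∨ b + c < a ∨ a + c < b := by
  simp only [nonMetricTriangles, Set.mem_insert_iff, Set.mem_singleton_iff] at h
  rcases h with h | h | h <;>
  · have hsum := congrArg Multiset.sum h
    have ha : a ∈ ({a, b, c} : Multiset ℕ) := by simp
    have hb : b ∈ ({a, b, c} : Multiset ℕ) := by simp
    have hc : c ∈ ({a, b, c} : Multiset ℕ) := by simp
    rw [h] at ha hb hc
    simp at hsum ha hb hc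
    omega

theorem mem_nonMetricTriangles_of_add_lt {a b c : ℕ} (ha : 1 ≤ a) (hb : 1 ≤ b) (hc : c ≤ 4)
    (h : a + b < c) : ({a, b, c} : Multiset ℕ) ∈ nonMetricTriangles := by
  have ha' : a ≤ 4 := by omega
  have hb' : b ≤ 4 := by omega
  unfold nonMetricTriangles
  interval_cases a <;> interval_cases b <;> interval_cases c <;> first | omega | decide

theorem mem_one_to_four_iff {n : ℕ} : n ∈ ({1, 2, 3, 4} : Set ℕ) ↔ 1 ≤ n ∧ n ≤ 4 := by
  simp only [Set.mem_insert_iff, Set.mem_singleton_iff]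
  omega

section

variable {V : Type} (d : V → V → Option ℕ)

def HasNonMetricTriangle : Prop :=
  ∃ (x y z : V) (a b c : ℕ), x ≠ y ∧ y ≠ z ∧ x ≠ z ∧
    d x y = some a ∧ d y z = some b ∧ d x z = some c ∧ ({a, b, c} : Multiset ℕ) ∈ nonMetricTriangles

def HasForbiddenFourCycle : Prop :=
  ∃ x1 x2 x3 x4 : V, x1 ≠ x2 ∧ x1 ≠ x3 ∧ x1 ≠ x4 ∧ x2 ≠ x3 ∧ x2 ≠ x4 ∧ x3 ≠ x4 ∧
    d x1 x2 = some 1 ∧ d x2 x3 = some 1 ∧ d x3 x4 = some 1 ∧ d x4 x1 = some 4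

def edgeWeight (x y : V) : ℕ := (d x y).getD 4

def shortWalkLengths (x y : V) : Set ℕ :=
  {n | n = edgeWeight d x y ∨ (∃ z, n = edgeWeight d x z + edgeWeight d z y) ∨
    ∃ z u, n = edgeWeight d x z + edgeWeight d z u + edgeWeight d u y}

noncomputable def walkDist (x y : V) : ℕ := sInf (shortWalkLengths d x y)

variable {d}

theorem IsCompletion.not_hasNonMetricTriangle {S : Set ℕ} {d' : V → V → ℕ}
    (hd' : IsCompletion S d d') : ¬ HasNonMetricTriangle d := by
  obtain ⟨hcomm, -, hext, htri⟩ := hd'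
  rintro ⟨x, y, z, a, b, c, hxy, hyz, hxz, hab, hbc, hac, hm⟩
  have h1 := htri x y z hxy hyz hxz
  have h2 := htri x z y hxz hyz.symm hxy
  have h3 := htri y x z hxy.symm hxz hyz
  rw [hcomm z y] at h2
  rw [hcomm y x] at h3
  rw [hext x y a hab, hext y z b hbc, hext x z c hac] at h1 h2 h3
  have := add_lt_of_mem_nonMetricTriangles hm
  omega

theorem IsCompletion.not_hasForbiddenFourCycle {S : Set ℕ} {d' : V → V → ℕ}
    (hd' : IsCompletion S d d') : ¬ HasForbiddenFourCycle d := by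
  obtain ⟨hcomm, -, hext, htri⟩ := hd'
  rintro ⟨x1, x2, x3, x4, h12, h13, h14, h23, h24, h34, d12, d23, d34, d41⟩
  have t1 := htri x1 x2 x3 h12 h23 h13
  have t2 := htri x4 x3 x1 h34.symm h13.symm h14.symm
  rw [hcomm x4 x3, hcomm x3 x1] at t2
  rw [hext _ _ _ d12, hext _ _ _ d23] at t1
  rw [hext _ _ _ d34, hext _ _ _ d41] at t2
  omega

theorem edgeWeight_of_eq_some {x y : V} {v : ℕ} (h : d x y = some v) : edgeWeight d x y = v := by
  simp [edgeWeight, h]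

theorem edgeWeight_comm (hsymm : ∀ x y, d x y = d y x) (x y : V) :
    edgeWeight d x y = edgeWeight d y x := by
  rw [edgeWeight, hsymm]; rfl

theorem ne_of_eq_some (hirr : ∀ x, d x x = none) {x y : V} {v : ℕ} (h : d x y = some v) :
    x ≠ y := by
  rintro rfl
  simp [hirr] at h

theorem eq_some_of_edgeWeight_eq {x y : V} {n : ℕ} (h : edgeWeight d x y = n) (hn : n < 4) :
    d x y = some n := by
  cases hd : d x y <;> simp_all [edgeWeight]

theorem one_le_edgeWeight (hval : ∀ x y v, d x y = some v → v ∈ ({1, 2, 3, 4} : Set ℕ))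
    (x y : V) : 1 ≤ edgeWeight d x y := by
  cases hd : d x y with
  | none => simp [edgeWeight, hd]
  | some v => simpa [edgeWeight, hd] using (mem_one_to_four_iff.mp (hval x y v hd)).1

theorem edgeWeight_le_four (hval : ∀ x y v, d x y = some v → v ∈ ({1, 2, 3, 4} : Set ℕ))
    (x y : V) : edgeWeight d x y ≤ 4 := by
  cases hd : d x y with
  | none => simp [edgeWeight, hd]
  | some v => simpa [edgeWeight, hd] using (mem_one_to_four_iff.mp (hval x y v hd)).2

theorem walkDist_mem_shortWalkLengths (x y : V) : walkDist d x y ∈ shortWalkLengths d x y :=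
  Nat.sInf_mem ⟨_, Or.inl rfl⟩

theorem walkDist_le {x y : V} {n : ℕ} (h : n ∈ shortWalkLengths d x y) : walkDist d x y ≤ n :=
  Nat.sInf_le h

theorem walkDist_le_edgeWeight (x y : V) : walkDist d x y ≤ edgeWeight d x y :=
  walkDist_le (Or.inl rfl)

theorem walkDist_le_four (hval : ∀ x y v, d x y = some v → v ∈ ({1, 2, 3, 4} : Set ℕ))
    (x y : V) : walkDist d x y ≤ 4 :=
  (walkDist_le_edgeWeight x y).trans (edgeWeight_le_four hval x y)

theorem one_le_walkDist (hval : ∀ x y v, d x y = some v → v ∈ ({1, 2, 3, 4} : Set ℕ))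
    (x y : V) : 1 ≤ walkDist d x y := by
  have hw := one_le_edgeWeight hval
  rcases walkDist_mem_shortWalkLengths x y with h | ⟨z, h⟩ | ⟨z, u, h⟩
  · exact h ▸ hw x y
  · have := hw x z; omega
  · have := hw x z; omega

theorem shortWalkLengths_comm (hsymm : ∀ x y, d x y = d y x) (x y : V) :
    shortWalkLengths d x y = shortWalkLengths d y x := by
  have hw := edgeWeight_comm hsymm
  ext n
  constructor <;> rintro (h | ⟨z, h⟩ | ⟨z, u, h⟩)
  · exact Or.inl (h.trans (hw _ _))
  · exact Or.inr (Or.inl ⟨z, by rw [h, hw x z, hw z y]; ring⟩)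
  · exact Or.inr (Or.inr ⟨u, z, by rw [h, hw x z, hw z u, hw u y]; ring⟩)
  · exact Or.inl (h.trans (hw _ _))
  · exact Or.inr (Or.inl ⟨z, by rw [h, hw y z, hw z x]; ring⟩)
  · exact Or.inr (Or.inr ⟨u, z, by rw [h, hw y z, hw z u, hw u x]; ring⟩)

theorem walkDist_comm (hsymm : ∀ x y, d x y = d y x) (x y : V) :
    walkDist d x y = walkDist d y x :=
  congrArg sInf (shortWalkLengths_comm hsymm x y)

/-- Walks of total length below `4` have at most three edges, so they can be concatenated. -/
theorem add_mem_shortWalkLengths (hval : ∀ x y v, d x y = some v → v ∈ ({1, 2, 3, 4} : Set ℕ))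
    {x y z : V} {a b : ℕ} (ha : a ∈ shortWalkLengths d x y) (hb : b ∈ shortWalkLengths d y z)
    (hlt : a + b < 4) : a + b ∈ shortWalkLengths d x z := by
  have hw := one_le_edgeWeight hval
  rcases ha with rfl | ⟨u, rfl⟩ | ⟨u, u', rfl⟩ <;> rcases hb with rfl | ⟨p, rfl⟩ | ⟨p, q, rfl⟩
  · exact Or.inr (Or.inl ⟨y, rfl⟩)
  · exact Or.inr (Or.inr ⟨y, p, by ring⟩)
  · have := hw y p; have := hw p q; have := hw q z; have := hw x y; omega
  · exact Or.inr (Or.inr ⟨u, y, rfl⟩)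
  · have := hw x u; have := hw u y; have := hw y p; have := hw p z; omega
  · have := hw y p; have := hw p q; have := hw q z; have := hw x u; omega
  · have := hw x u; have := hw u u'; have := hw u' y; have := hw y z; omega
  · have := hw x u; have := hw u u'; have := hw u' y; have := hw y p; omega
  · have := hw x u; have := hw u u'; have := hw u' y; have := hw y p; omega

theorem walkDist_triangle (hval : ∀ x y v, d x y = some v → v ∈ ({1, 2, 3, 4} : Set ℕ))
    (x y z : V) : walkDist d x z ≤ walkDist d x y + walkDist d y z := by
  by_cases h4 : 4 ≤ walkDist d x y + walkDist d y z
  · exact (walkDist_le_four hval x z).trans h4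
  · exact walkDist_le (add_mem_shortWalkLengths hval (walkDist_mem_shortWalkLengths x y)
      (walkDist_mem_shortWalkLengths y z) (by omega))

theorem hasNonMetricTriangle_of_two_edge_shortcut
    (hval : ∀ x y v, d x y = some v → v ∈ ({1, 2, 3, 4} : Set ℕ)) (hirr : ∀ x, d x x = none)
    {x y z : V} {v : ℕ} (hxy : d x y = some v) (hlt : edgeWeight d x z + edgeWeight d z y < v) :
    HasNonMetricTriangle d := by
  have hv := (mem_one_to_four_iff.mp (hval x y v hxy)).2
  have hxz1 := one_le_edgeWeight hval x z
  have hzy1 := one_le_edgeWeight hval z y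
  have hxz := eq_some_of_edgeWeight_eq (d := d) (x := x) (y := z) rfl (by omega)
  have hzy := eq_some_of_edgeWeight_eq (d := d) (x := z) (y := y) rfl (by omega)
  exact ⟨x, z, y, _, _, v, ne_of_eq_some hirr hxz, ne_of_eq_some hirr hzy, ne_of_eq_some hirr hxy,
    hxz, hzy, hxy, mem_nonMetricTriangles_of_add_lt hxz1 hzy1 hv hlt⟩

theorem hasForbiddenFourCycle_of_three_edge_shortcut
    (hval : ∀ x y v, d x y = some v → v ∈ ({1, 2, 3, 4} : Set ℕ)) (hsymm : ∀ x y, d x y = d y x)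
    (hirr : ∀ x, d x x = none) {x y z u : V} {v : ℕ} (hxy : d x y = some v)
    (hlt : edgeWeight d x z + edgeWeight d z u + edgeWeight d u y < v) :
    HasForbiddenFourCycle d := by
  have hv := (mem_one_to_four_iff.mp (hval x y v hxy)).2
  have hw := one_le_edgeWeight hval
  have hxz1 := hw x z; have hzu1 := hw z u; have huy1 := hw u y
  obtain rfl : v = 4 := by omega
  have hxz : d x z = some 1 := eq_some_of_edgeWeight_eq (by omega) (by norm_num)
  have hzu : d z u = some 1 := eq_some_of_edgeWeight_eq (by omega) (by norm_num)
  have huy : d u y = some 1 := eq_some_of_edgeWeight_eq (by omega) (by norm_num)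
  have hyx : d y x = some 4 := by rw [← hsymm, hxy]
  have hxu : x ≠ u := by rintro rfl; simp [huy] at hxy
  have hzy : z ≠ y := by rintro rfl; simp [hxz] at hxy
  exact ⟨x, z, u, y, ne_of_eq_some hirr hxz, hxu, ne_of_eq_some hirr hxy, ne_of_eq_some hirr hzu,
    hzy, ne_of_eq_some hirr huy, hxz, hzu, huy, hyx⟩

theorem walkDist_of_eq_some (hval : ∀ x y v, d x y = some v → v ∈ ({1, 2, 3, 4} : Set ℕ))
    (hsymm : ∀ x y, d x y = d y x) (hirr : ∀ x, d x x = none)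
    (hT : ¬ HasNonMetricTriangle d) (hC : ¬ HasForbiddenFourCycle d) {x y : V} {v : ℕ}
    (hxy : d x y = some v) : walkDist d x y = v := by
  refine le_antisymm (edgeWeight_of_eq_some hxy ▸ walkDist_le_edgeWeight x y) (not_lt.mp ?_)
  intro hlt
  rcases walkDist_mem_shortWalkLengths x y with h | ⟨z, h⟩ | ⟨z, u, h⟩
  · rw [h, edgeWeight_of_eq_some hxy] at hlt
    exact lt_irrefl v hlt
  · exact hT (hasNonMetricTriangle_of_two_edge_shortcut hval hirr hxy (h ▸ hlt))
  · exact hC (hasForbiddenFourCycle_of_three_edge_shortcut hval hsymm hirr hxy (h ▸ hlt))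

theorem isCompletion_walkDist (hval : ∀ x y v, d x y = some v → v ∈ ({1, 2, 3, 4} : Set ℕ))
    (hsymm : ∀ x y, d x y = d y x) (hirr : ∀ x, d x x = none)
    (hT : ¬ HasNonMetricTriangle d) (hC : ¬ HasForbiddenFourCycle d) :
    IsCompletion {1, 2, 3, 4} d (walkDist d) :=
  ⟨walkDist_comm hsymm,
    fun x y _ => mem_one_to_four_iff.mpr ⟨one_le_walkDist hval x y, walkDist_le_four hval x y⟩,
    fun _ _ _ => walkDist_of_eq_some hval hsymm hirr hT hC,
    fun x y z _ _ _ => walkDist_triangle hval x y z⟩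

end

theorem completion_iff_no_obstacle_general {V : Type}
    (d : V → V → Option ℕ)
    (hsymm : ∀ x y, d x y = d y x)
    (hirr : ∀ x, d x x = none)
    (hval : ∀ x y v, d x y = some v → v ∈ ({1, 2, 3, 4} : Set ℕ)) :
    (∃ d' : V → V → ℕ, IsCompletion {1, 2, 3, 4} d d') ↔
      ((¬ ∃ (x y z : V) (a b c : ℕ), x ≠ y ∧ y ≠ z ∧ x ≠ z ∧
          d x y = some a ∧ d y z = some b ∧ d x z = some c ∧
          ({a, b, c} : Multiset ℕ) ∈
            ({ {1, 1, 3}, {1, 1, 4}, {1, 2, 4} } : Set (Multiset ℕ))) ∧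
        (¬ ∃ x1 x2 x3 x4 : V, x1 ≠ x2 ∧ x1 ≠ x3 ∧ x1 ≠ x4 ∧ x2 ≠ x3 ∧ x2 ≠ x4 ∧ x3 ≠ x4 ∧
          d x1 x2 = some 1 ∧ d x2 x3 = some 1 ∧ d x3 x4 = some 1 ∧ d x4 x1 = some 4)) := by
  constructor
  · rintro ⟨d', hd'⟩
    exact ⟨hd'.not_hasNonMetricTriangle, hd'.not_hasForbiddenFourCycle⟩
  · rintro ⟨hT, hC⟩
    exact ⟨walkDist d, isCompletion_walkDist hval hsymm hirr hT hC⟩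

/-- a partial symmetric structure with distances in `{1,2,3,4}` has a
completion to a metric space with distances in `{1,2,3,4}` if and only if it contains no
non-metric triangle (with distances 1-1-3, 1-1-4 or 1-2-4) and no 4-cycle with distances
1-1-1-4. -/
theorem completion_iff_no_obstacle {V : Type} [Fintype V]
    (d : V → V → Option ℕ)
    (hsymm : ∀ x y, d x y = d y x)
    (hirr : ∀ x, d x x = none)
    (hval : ∀ x y v, d x y = some v → v ∈ ({1, 2, 3, 4} : Set ℕ)) :
    (∃ d' : V → V → ℕ, IsCompletion {1, 2, 3, 4} d d') ↔
      ((¬ ∃ (x y z : V) (a b c : ℕ), x ≠ y ∧ y ≠ z ∧ x ≠ z ∧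
          d x y = some a ∧ d y z = some b ∧ d x z = some c ∧
          ({a, b, c} : Multiset ℕ) ∈
            ({ {1, 1, 3}, {1, 1, 4}, {1, 2, 4} } : Set (Multiset ℕ))) ∧
        (¬ ∃ x1 x2 x3 x4 : V, x1 ≠ x2 ∧ x1 ≠ x3 ∧ x1 ≠ x4 ∧ x2 ≠ x3 ∧ x2 ≠ x4 ∧ x3 ≠ x4 ∧
          d x1 x2 = some 1 ∧ d x2 x3 = some 1 ∧ d x3 x4 = some 1 ∧ d x4 x1 = some 4)) :=
  completion_iff_no_obstacle_general d hsymm hirr hval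
end
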